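/- Let γ : ℝ → ℝ^D be a C³ curve parametrized by arc length, i.e. ‖γ'(t)‖ = 1 for all t, set x = γ(0), and let V ⊆ ℝ^D be a linear subspace with γ'(0) ∈ V and γ''(0) ∈ V^⊥. Let n ∈ V^⊥ be a unit vector, let r > 0, set c = x + r n, and let π(y) = c + r (y − c)/‖y − c‖ denote the radial projection onto the sphere of center c and radius r. Let P denote the orthogonal projection of ℝ^D onto V. Then there exist constants C > 0 and ε > 0 such that for all s ∈ (0, ε), | ‖P(π(γ(s)) − x)‖ − s | ≤ C s³. -/

import Mathlib

/-!
Taylor's theorem gives `γ s = x + s • T + (s ^ 2 / 2) • N + O(s ^ 3)` with `T = γ'(0) ∈ V`,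
`N = γ''(0) ∈ Vᗮ` and `‖T‖ = 1`, so `‖P (γ s - x)‖ = s + O(s ^ 3)`. Since `T ⊥ n`, Pythagoras gives
`‖γ s - c‖ = ‖s • T - r • n‖ + O(s ^ 2) = r + O(s ^ 2)`. As `n ∈ Vᗮ`, the projection kills the
centre offset and `P (π (γ s) - x) = (r / ‖γ s - c‖) • P (γ s - x)`, whose norm is
`r / (r + O(s ^ 2)) * (s + O(s ^ 3)) = s + O(s ^ 3)`.
-/

open Asymptotics Filter Set Topology
open scoped Nat RealInnerProductSpace

section Taylor

variable {E : Type*} [NormedAddCommGroup E] [NormedSpace ℝ E]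

theorem taylor_isBigO_univ {f : ℝ → E} {x₀ : ℝ} {n : ℕ} (hf : ContDiff ℝ (n + 1) f) :
    (fun x ↦ f x - taylorWithinEval f n univ x₀ x) =O[𝓝 x₀] fun x ↦ (x - x₀) ^ (n + 1) := by
  have hnext : (fun x ↦ f x - taylorWithinEval f (n + 1) univ x₀ x) =O[𝓝 x₀]
      fun x ↦ (x - x₀) ^ (n + 1) := (taylor_isLittleO_univ (mod_cast hf)).isBigO
  have hterm : (fun x ↦ (((n + 1 : ℝ) * n !)⁻¹ * (x - x₀) ^ (n + 1)) •
      iteratedDerivWithin (n + 1) f univ x₀) =O[𝓝 x₀] fun x ↦ (x - x₀) ^ (n + 1) := by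
    simpa using ((isBigO_refl (fun x ↦ (x - x₀) ^ (n + 1)) (𝓝 x₀)).const_mul_left
      ((n + 1 : ℝ) * n !)⁻¹).smul (isBigO_const_const (iteratedDerivWithin (n + 1) f univ x₀)
        (one_ne_zero (α := ℝ)) (𝓝 x₀))
  refine (hnext.add hterm).congr_left fun x ↦ ?_
  rw [taylorWithinEval_succ]
  abel

theorem sub_sub_smul_deriv_isBigO {f : ℝ → E} (hf : ContDiff ℝ 2 f) :
    (fun t ↦ f t - f 0 - t • deriv f 0) =O[𝓝 0] (· ^ 2) := by
  refine ((taylor_isBigO_univ (n := 1) hf).congr_left fun t ↦ ?_).congr_right fun t ↦ ?_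
  · simp [taylorWithinEval_succ, iteratedDerivWithin_univ, sub_sub]
  · simp

theorem sub_sub_smul_deriv_sub_smul_deriv_deriv_isBigO {f : ℝ → E} (hf : ContDiff ℝ 3 f) :
    (fun t ↦ f t - f 0 - t • deriv f 0 - (t ^ 2 / 2) • deriv (deriv f) 0) =O[𝓝 0] (· ^ 3) := by
  refine ((taylor_isBigO_univ (n := 2) hf).congr_left fun t ↦ ?_).congr_right fun t ↦ ?_
  · simp only [taylorWithinEval_succ, taylor_within_zero_eval, iteratedDerivWithin_univ,
      iteratedDeriv_succ]
    norm_num [div_eq_inv_mul, sub_sub]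
  · simp

end Taylor

section InnerProduct

variable {F : Type*} [NormedAddCommGroup F] [InnerProductSpace ℝ F]

theorem abs_norm_add_sub_norm_le_of_inner_eq_zero {u v : F} (h : ⟪u, v⟫ = 0) (hv : v ≠ 0) :
    |‖u + v‖ - ‖v‖| ≤ ‖u‖ ^ 2 / ‖v‖ := by
  have hpyth : ‖u + v‖ ^ 2 = ‖u‖ ^ 2 + ‖v‖ ^ 2 := by
    simpa only [sq] using norm_add_sq_eq_norm_sq_add_norm_sq_real h
  have hv' : 0 < ‖v‖ := norm_pos_iff.2 hv
  have hle : ‖v‖ ≤ ‖u + v‖ := by nlinarith [norm_nonneg (u + v), sq_nonneg ‖u‖]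
  rw [abs_of_nonneg (sub_nonneg.2 hle), le_div_iff₀ hv']
  nlinarith [norm_nonneg (u + v)]

theorem norm_sub_add_sub_norm_isBigO {f : ℝ → F} {v : F} (hf : ContDiff ℝ 2 f) (hv : v ≠ 0)
    (horth : ⟪deriv f 0, v⟫ = 0) :
    (fun s ↦ ‖f s - (f 0 + v)‖ - ‖v‖) =O[𝓝 0] (· ^ 2) := by
  set R := fun t ↦ f t - f 0 - t • deriv f 0
  have hbound : ∀ s, |‖f s - (f 0 + v)‖ - ‖v‖| ≤ ‖R s‖ + ‖deriv f 0‖ ^ 2 / ‖v‖ * s ^ 2 := by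
    intro s
    have hsplit : f s - (f 0 + v) = R s + (s • deriv f 0 + -v) := by simp only [R]; abel
    have horth' : ⟪s • deriv f 0, -v⟫ = 0 := by simp [real_inner_smul_left, horth]
    calc |‖f s - (f 0 + v)‖ - ‖v‖|
        ≤ |‖R s + (s • deriv f 0 + -v)‖ - ‖s • deriv f 0 + -v‖|
          + |‖s • deriv f 0 + -v‖ - ‖-v‖| := by
          rw [hsplit, norm_neg]; exact abs_sub_le _ _ _
      _ ≤ ‖R s‖ + ‖s • deriv f 0‖ ^ 2 / ‖-v‖ := by
          gcongr
          · exact (abs_norm_sub_norm_le _ _).trans_eq (by rw [add_sub_cancel_right])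
          · exact abs_norm_add_sub_norm_le_of_inner_eq_zero horth' (neg_ne_zero.2 hv)
      _ = ‖R s‖ + ‖deriv f 0‖ ^ 2 / ‖v‖ * s ^ 2 := by
          rw [norm_neg, norm_smul, Real.norm_eq_abs, mul_pow, sq_abs]; ring
  refine (IsBigO.of_bound' (Eventually.of_forall fun s ↦ ?_)).trans
    ((sub_sub_smul_deriv_isBigO hf).norm_left.add
      ((isBigO_refl _ _).const_mul_left (‖deriv f 0‖ ^ 2 / ‖v‖)))
  rw [Real.norm_eq_abs, Real.norm_of_nonneg (by positivity)]
  exact hbound s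

variable (V : Submodule ℝ F) [V.HasOrthogonalProjection]

theorem orthogonalProjectionOnto_add_smul_sub_sub {w : F} (hw : w ∈ Vᗮ) (x z : F) (k : ℝ) :
    V.orthogonalProjectionOnto (x + w + k • (z - (x + w)) - x) =
      k • V.orthogonalProjectionOnto (z - x) := by
  have hsplit : x + w + k • (z - (x + w)) - x = (1 - k) • w + k • (z - x) := by module
  rw [hsplit, map_add, map_smul, map_smul,
    Submodule.orthogonalProjectionOnto_apply_of_mem_orthogonal hw, smul_zero, zero_add]

theorem norm_orthogonalProjectionOnto_sub_sub_isBigO {f : ℝ → F} (hf : ContDiff ℝ 3 f)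
    (hunit : ‖deriv f 0‖ = 1) (htan : deriv f 0 ∈ V) (hnor : deriv (deriv f) 0 ∈ Vᗮ) :
    (fun s ↦ ‖V.orthogonalProjectionOnto (f s - f 0)‖ - s) =O[𝓝[>] 0] (· ^ 3) := by
  set R := fun t ↦ f t - f 0 - t • deriv f 0 - (t ^ 2 / 2) • deriv (deriv f) 0
  have hproj : ∀ s, (V.orthogonalProjectionOnto (f s - f 0) : F) =
      s • deriv f 0 + V.orthogonalProjectionOnto (R s) := by
    intro s
    have hsplit : f s - f 0 = s • deriv f 0 + (s ^ 2 / 2) • deriv (deriv f) 0 + R s := by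
      simp only [R]; abel
    rw [hsplit, map_add, map_add, map_smul, map_smul,
      Submodule.orthogonalProjectionOnto_apply_of_mem_orthogonal hnor]
    simp [Submodule.starProjection_eq_self_iff.2 htan]
  refine (IsBigO.of_bound' ?_).trans
    ((sub_sub_smul_deriv_sub_smul_deriv_deriv_isBigO hf).mono nhdsWithin_le_nhds)
  filter_upwards [self_mem_nhdsWithin] with s (hs : 0 < s)
  have hsT : ‖s • deriv f 0‖ = s := by rw [norm_smul, hunit, mul_one, Real.norm_of_nonneg hs.le]
  calc ‖‖V.orthogonalProjectionOnto (f s - f 0)‖ - s‖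
      = |‖(V.orthogonalProjectionOnto (f s - f 0) : F)‖ - ‖s • deriv f 0‖| := by
        rw [hsT, Real.norm_eq_abs, Submodule.coe_norm]
    _ ≤ ‖V.orthogonalProjectionOnto (R s)‖ := by
        rw [hproj]; exact (abs_norm_sub_norm_le _ _).trans_eq (by rw [add_sub_cancel_left]; rfl)
    _ ≤ ‖R s‖ := V.norm_orthogonalProjectionOnto_apply_le _

end InnerProduct

theorem div_mul_sub_isBigO {l : Filter ℝ} {A B : ℝ → ℝ} {r : ℝ} (hr : r ≠ 0)
    (hA : (fun s ↦ A s - s) =O[l] (· ^ 3)) (hB : (fun s ↦ B s - r) =O[l] (· ^ 2))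
    (hBr : Tendsto B l (𝓝 r)) :
    (fun s ↦ r / B s * A s - s) =O[l] (· ^ 3) := by
  have hinv : (fun s ↦ (B s)⁻¹) =O[l] (fun _ ↦ (1 : ℝ)) := (hBr.inv₀ hr).isBigO_one ℝ
  have hnum : (fun s ↦ r * (A s - s) - s * (B s - r)) =O[l] (· ^ 3) :=
    (hA.const_mul_left r).sub (((isBigO_refl (fun s ↦ s) l).mul hB).congr_right fun s ↦ by ring)
  refine (hinv.mul hnum).congr' ?_ (Eventually.of_forall fun s ↦ one_mul _)
  filter_upwards [hBr.eventually_ne hr] with s hs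
  field_simp
  ring

theorem Asymptotics.IsBigO.exists_pos_bound_Ioo {E G : Type*} [Norm E]
    [SeminormedAddCommGroup G] {f : ℝ → E} {g : ℝ → G} {a : ℝ} (h : f =O[𝓝[>] a] g) :
    ∃ C > 0, ∃ b > a, ∀ s ∈ Ioo a b, ‖f s‖ ≤ C * ‖g s‖ := by
  obtain ⟨C, hC, hCfg⟩ := h.exists_pos
  obtain ⟨b, hb, hsub⟩ := mem_nhdsGT_iff_exists_Ioo_subset.1 hCfg.bound
  exact ⟨C, hC, b, hb, hsub⟩

/-- Statement (iii) in the proof of Theorem 4 of the paper: radially projecting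
`γ(s)` onto the approximating sphere `S_x(c, r)` (passing through `x = γ(0)`,
tangent to `V` at `x`, with center `c = x + r n`, `n ∈ Vᗮ` a unit vector) and then
orthogonally projecting onto `V` yields a Euclidean distance to `x` estimating the
arc length `s` with third-order error. -/
theorem stmt_10 {D : ℕ} (γ : ℝ → EuclideanSpace ℝ (Fin D))
    (hγ : ContDiff ℝ 3 γ)
    (hunit : ∀ t : ℝ, ‖deriv γ t‖ = 1)
    (x : EuclideanSpace ℝ (Fin D)) (hx : x = γ 0)
    (V : Submodule ℝ (EuclideanSpace ℝ (Fin D)))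
    (htan : deriv γ 0 ∈ V) (hnor : deriv (deriv γ) 0 ∈ Vᗮ)
    (n : EuclideanSpace ℝ (Fin D)) (hnV : n ∈ Vᗮ) (hn : ‖n‖ = 1)
    (r : ℝ) (hr : 0 < r)
    (c : EuclideanSpace ℝ (Fin D)) (hc : c = x + r • n)
    (π : EuclideanSpace ℝ (Fin D) → EuclideanSpace ℝ (Fin D))
    (hπ : ∀ z, π z = c + (r / ‖z - c‖) • (z - c)) :
    ∃ C > (0 : ℝ), ∃ ε > (0 : ℝ), ∀ s ∈ Set.Ioo (0 : ℝ) ε,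
      |‖(V.orthogonalProjection (π (γ s) - x) : EuclideanSpace ℝ (Fin D))‖ - s|
        ≤ C * s ^ 3 := by
  subst hx hc
  set B := fun s ↦ ‖γ s - (γ 0 + r • n)‖
  have hrn : ‖r • n‖ = r := by rw [norm_smul, hn, Real.norm_of_nonneg hr.le, mul_one]
  have hdist : (fun s ↦ B s - r) =O[𝓝 0] (· ^ 2) := by
    have hrn0 : r • n ≠ 0 := smul_ne_zero hr.ne' (norm_ne_zero_iff.1 (hn ▸ one_ne_zero))
    have horth : ⟪deriv γ 0, r • n⟫ = 0 := by
      rw [real_inner_smul_right, Submodule.inner_right_of_mem_orthogonal htan hnV, mul_zero]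
    simpa only [hrn] using norm_sub_add_sub_norm_isBigO (hγ.of_le (by norm_num)) hrn0 horth
  have hBr : Tendsto B (𝓝 0) (𝓝 r) := by
    simpa [B, hrn] using
      (hγ.continuous.sub (continuous_const (y := γ 0 + r • n))).norm.tendsto 0
  have hradial : ∀ s,
      ‖(V.orthogonalProjectionOnto (π (γ s) - γ 0) : EuclideanSpace ℝ (Fin D))‖ =
      r / B s * ‖(V.orthogonalProjectionOnto (γ s - γ 0) : V)‖ := by
    intro s
    rw [hπ, orthogonalProjectionOnto_add_smul_sub_sub V (Submodule.smul_mem _ r hnV),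
      Submodule.coe_smul, norm_smul, Real.norm_of_nonneg (by positivity), Submodule.coe_norm]
  obtain ⟨C, hC, ε, hε, hbound⟩ := (div_mul_sub_isBigO hr.ne'
    (norm_orthogonalProjectionOnto_sub_sub_isBigO V hγ (hunit 0) htan hnor)
    (hdist.mono nhdsWithin_le_nhds) (hBr.mono_left nhdsWithin_le_nhds)).exists_pos_bound_Ioo
  refine ⟨C, hC, ε, hε, fun s hs ↦ ?_⟩
  have hs3 := hbound s hs
  rwa [Real.norm_eq_abs, Real.norm_eq_abs, abs_of_pos (pow_pos hs.1 3), ← hradial] at hs3
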